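/- arXiv:2101.07247 — 2 statements merged into one kernel-verified Lean document; each statement's English description precedes it below -/
import Mathlib

section
/- Let G be a graph and T ⊆ G a normal tree. Then every end of G that lies in the closure of T contains exactly one normal ray of T, and sending these ends to the normal rays they contain is a bijection between the ends of G in the closure of T and the normal rays of T. -/
/-! Common definitions: rays, ends (à la Halin), the end space, directions
(via Mathlib's `SimpleGraph.end`), domination, generalised paths, etc. -/

open Classical SimpleGraph

universe u

variable {V : Type u}

/-- A ray in `G`: a one-way infinite path. -/
structure Ray (G : SimpleGraph V) where
  f : ℕ → V
  inj : Function.Injective f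
  adj : ∀ n, G.Adj (f n) (f (n + 1))

namespace Ray

variable {G : SimpleGraph V}

/-- `R` has a tail inside the vertex set `S`. -/
def TailIn (R : Ray G) (S : Set V) : Prop :=
  ∃ N, ∀ n, N ≤ n → R.f n ∈ S

/-- The set of the first `n` vertices of `R`. -/
noncomputable def initSeg (R : Ray G) (n : ℕ) : Finset V :=
  (Finset.range n).image R.f

end Ray

/-- Two rays are equivalent if no finite vertex set separates them, i.e. for
every finite `X` they have tails in a common component of `G - X`. -/
def RayEquiv (G : SimpleGraph V) (R S : Ray G) : Prop :=
  ∀ X : Finset V, ∃ C : G.ComponentCompl (X : Set V), R.TailIn C ∧ S.TailIn C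

/-- The ends of `G` in the sense of Halin: equivalence classes of rays. -/
def Ends (G : SimpleGraph V) : Type u :=
  { ω : Set (Ray G) // ∃ R : Ray G, ω = { S | RayEquiv G R S } }

/-- The end of a ray. -/
def Ray.end (G : SimpleGraph V) (R : Ray G) : Ends G :=
  ⟨{ S | RayEquiv G R S }, R, rfl⟩

/-- The end `ω` lives in the component `C` of `G - X`:  every ray in `ω` has a
tail in `C`.  (For genuine ends this is the statement `C = C(X,ω)`.) -/
def LivesIn {G : SimpleGraph V} (ω : Ends G) (X : Finset V)
    (C : G.ComponentCompl (X : Set V)) : Prop :=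
  ∀ R ∈ ω.1, R.TailIn C

/-- The basic open set `Ω(X,C)` of the end space. -/
def basicSet (G : SimpleGraph V) (X : Finset V) (C : G.ComponentCompl (X : Set V)) :
    Set (Ends G) :=
  { ω | LivesIn ω X C }

/-- The end space: the topology on `Ends G` generated by the sets `Ω(X,C)`. -/
instance endsTopology (G : SimpleGraph V) : TopologicalSpace (Ends G) :=
  TopologicalSpace.generateFrom
    { U | ∃ (X : Finset V) (C : G.ComponentCompl (X : Set V)), U = basicSet G X C }

section Directions

/-- The component `f(X)` chosen by the direction `f` at the finite vertex set `X`. -/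
def dirComp {G : SimpleGraph V} (f : G.end) (X : Finset V) : G.ComponentCompl (X : Set V) :=
  f.1 (Opposite.op X)


variable (G : SimpleGraph V)

/-- The ray `R` induces the direction `f` (i.e. `f = f_ω` for the end `ω` of `R`):
for every finite `X`, the component `f(X)` contains a tail of `R`. -/
def InducesDir {G : SimpleGraph V} (R : Ray G) (f : G.end) : Prop :=
  ∀ X : Finset V, R.TailIn (dirComp f X : Set V)

/-- The end `ω` induces the direction `f`, i.e. `f = f_ω`. -/
def EndInducesDir {G : SimpleGraph V} (ω : Ends G) (f : G.end) : Prop :=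
  ∀ (X : Finset V), ∀ R ∈ ω.1, R.TailIn (dirComp f X : Set V)

/-- A direction `f` is countably determined in `G` if some countable set of
directional choices `(X, C)` distinguishes `f` from every other direction. -/
def DirCountablyDetermined {G : SimpleGraph V} (f : G.end) : Prop :=
  ∃ D : Set ((X : Finset V) × G.ComponentCompl (X : Set V)), D.Countable ∧
    ∀ h : G.end, h ≠ f → ∃ p ∈ D,
      dirComp f p.1 = p.2 ∧ dirComp h p.1 ≠ p.2

/-- `G` is countably determined: some countable set of directional choices
distinguishes every two distinct directions of `G` from each other. -/
def GraphCountablyDetermined (G : SimpleGraph V) : Prop :=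
  ∃ D : Set ((X : Finset V) × G.ComponentCompl (X : Set V)), D.Countable ∧
    ∀ f h : G.end, f ≠ h → ∃ p ∈ D,
      (dirComp f p.1 = p.2 ∧ dirComp h p.1 ≠ p.2) ∨
      (dirComp h p.1 = p.2 ∧ dirComp f p.1 ≠ p.2)

/-- `R` is directional in `G`: the directional choices given by the finite
initial segments of `R` distinguish the direction induced by `R` from every
other direction of `G`. -/
def Directional {G : SimpleGraph V} (R : Ray G) : Prop :=
  ∀ h : G.end, (∃ X : Finset V, ¬ R.TailIn (dirComp h X : Set V)) →
    ∃ n : ℕ, ¬ R.TailIn (dirComp h (R.initSeg n) : Set V)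

/-- `R` is topological in `G`: the basic open sets `Ω(X_n, ω)`, for `X_n` the
first `n` vertices of `R` and `ω` the end of `R`, form a neighbourhood base at
`ω` in the end space of `G`. -/
def Topological {G : SimpleGraph V} (R : Ray G) : Prop :=
  ∀ U : Set (Ends G), IsOpen U → R.end G ∈ U →
    ∃ (n : ℕ) (C : G.ComponentCompl (R.initSeg n : Set V)),
      LivesIn (R.end G) (R.initSeg n) C ∧ basicSet G (R.initSeg n) C ⊆ U

end Directions

section Domination

variable (G : SimpleGraph V)

/-- `v` dominates the ray `R`: no finite vertex set avoiding `v` separates `v`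
from `R` (equivalently, there is an infinite `v`–`R` fan). -/
def DominatesRay (v : V) (R : Ray G) : Prop :=
  ∀ X : Finset V, v ∉ X → ∃ (u : V) (W : G.Walk v u),
    (∃ n, R.f n = u) ∧ ∀ w ∈ W.support, w ∉ (X : Set V)

/-- `v` dominates the end `ω`. -/
def DominatesEnd (v : V) (ω : Ends G) : Prop :=
  ∀ R ∈ ω.1, DominatesRay G v R

end Domination

/-- A double ray in `G`. -/
structure DoubleRay (G : SimpleGraph V) where
  f : ℤ → V
  inj : Function.Injective f
  adj : ∀ n : ℤ, G.Adj (f n) (f (n + 1))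

namespace DoubleRay

variable {G : SimpleGraph V}

/-- The positive tail of `D` lies in the end `ω`. -/
def PosTailIn (D : DoubleRay G) (ω : Ends G) : Prop :=
  ∃ R ∈ ω.1, ∃ N : ℤ, ∀ n : ℕ, R.f n = D.f (N + n)

/-- The negative tail of `D` lies in the end `ω`. -/
def NegTailIn (D : DoubleRay G) (ω : Ends G) : Prop :=
  ∃ R ∈ ω.1, ∃ N : ℤ, ∀ n : ℕ, R.f n = D.f (N - n)

end DoubleRay

/-- `P` is (the vertex set of) a generalised path in `G` with endpoints
`ω₁ ≠ ω₂`. -/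
def IsGenPath (G : SimpleGraph V) (P : Set V) (ω₁ ω₂ : Ends G) : Prop :=
  (∃ D : DoubleRay G, P = Set.range D.f ∧
    ((D.PosTailIn ω₁ ∧ D.NegTailIn ω₂) ∨ (D.PosTailIn ω₂ ∧ D.NegTailIn ω₁))) ∨
  (∃ (u v : V) (W : G.Walk u v), W.IsPath ∧ P = { x | x ∈ W.support } ∧
    ((DominatesEnd G u ω₁ ∧ DominatesEnd G v ω₂) ∨
     (DominatesEnd G u ω₂ ∧ DominatesEnd G v ω₁))) ∨
  (∃ R : Ray G, P = Set.range R.f ∧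
    ((R ∈ ω₁.1 ∧ DominatesEnd G (R.f 0) ω₂) ∨
     (R ∈ ω₂.1 ∧ DominatesEnd G (R.f 0) ω₁)))

/-- A sun in `G` centred at `ω`: pairwise vertex-disjoint generalised paths
`(P i, {ω, leaf i})` with pairwise distinct leaves `leaf i ≠ ω`, where either
all the `P i` are double rays with one tail in `leaf i` and another in `ω`, or
all the `P i` are rays in `leaf i` whose first vertices dominate `ω`. -/
def IsSun (G : SimpleGraph V) (ω : Ends G) {I : Type*}
    (P : I → Set V) (leaf : I → Ends G) : Prop :=
  (∀ i j, i ≠ j → Disjoint (P i) (P j)) ∧ Function.Injective leaf ∧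
  (∀ i, leaf i ≠ ω) ∧
  ((∀ i, ∃ D : DoubleRay G, P i = Set.range D.f ∧
      ((D.PosTailIn (leaf i) ∧ D.NegTailIn ω) ∨
       (D.PosTailIn ω ∧ D.NegTailIn (leaf i)))) ∨
   (∀ i, ∃ R : Ray G, P i = Set.range R.f ∧ R ∈ (leaf i).1 ∧
      DominatesEnd G (R.f 0) ω))


/-- A normal tree in `G`: a rooted tree `T ⊆ G` such that the endvertices of
every `T`-path in `G` are comparable in the tree-order of `T`. -/
structure NormalTree (G : SimpleGraph V) where
  T : G.Subgraph
  root : V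
  root_mem : root ∈ T.verts
  isTree : T.coe.IsTree
  normal : ∀ (u v : T.verts) (W : G.Walk u.1 v.1), W.IsPath → 0 < W.length →
    (∀ w ∈ W.support, w ≠ u.1 → w ≠ v.1 → w ∉ T.verts) →
    (∀ P : T.coe.Walk ⟨root, root_mem⟩ v, P.IsPath → u ∈ P.support) ∨
    (∀ P : T.coe.Walk ⟨root, root_mem⟩ u, P.IsPath → v ∈ P.support)

/-- The tree-order of a normal tree: `u ≤ v` iff `u` lies on the unique path
of the tree from the root to `v`. -/
def NormalTree.Le {G : SimpleGraph V} (N : NormalTree G) (u v : N.T.verts) : Prop :=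
  ∀ P : N.T.coe.Walk ⟨N.root, N.root_mem⟩ v, P.IsPath → u ∈ P.support

/-- The ray `R` lies in the subgraph `H`. -/
def Ray.InSubgraph {G : SimpleGraph V} (R : Ray G) (H : G.Subgraph) : Prop :=
  ∀ n, H.Adj (R.f n) (R.f (n + 1))

/-- A normal ray of the normal tree `N`: a ray of the tree starting at the root. -/
def NormalTree.IsNormalRay {G : SimpleGraph V} (N : NormalTree G) (R : Ray G) : Prop :=
  R.f 0 = N.root ∧ R.InSubgraph N.T

/-- The end `ω` lies in the closure of the vertex set `M`. -/
def InClosureOf {G : SimpleGraph V} (ω : Ends G) (M : Set V) : Prop :=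
  ∀ (X : Finset V) (C : G.ComponentCompl (X : Set V)), LivesIn ω X C →
    ((C : Set V) ∩ M).Nonempty

/-! The key consequence of normality: if `w ∈ T` and every vertex of `T` below `w` other than
`w` lies in `K`, then for vertices `a, b ∈ T` in one component of `G - K` we have
`w ≤ a ↔ w ≤ b` (split a connecting walk at its vertices in `T`; what remains are `T`-paths,
whose ends are comparable). Taking for `K` the common initial segment of two distinct normal
rays shows that it separates them. Conversely, for an end `ω` in the closure of `T`, climb the
tree from the root: if all vertices of `T` in `C(⌈v⌉, ω)` lie above `v` (and there are some,
since `ω` is in the closure), they all lie above one upper neighbour `w` of `v`, and then the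
same holds for `w`. The resulting normal ray has a tail in every `C(X, ω)`, because it
eventually leaves the finite down-closure of `X`. -/

namespace SimpleGraph.Walk

variable {α : Type*} [DecidableEq α] {H : SimpleGraph α} {a b u w : α}

lemma mem_support_takeUntil_or (p : H.Walk a b) (hu : u ∈ p.support) (hw : w ∈ p.support) :
    u ∈ (p.takeUntil w hw).support ∨ w ∈ (p.takeUntil u hu).support := by
  have key : ∀ {x y : α} (hx : x ∈ p.support) (hy : y ∈ p.support),
      p.support.idxOf x ≤ p.support.idxOf y → x ∈ (p.takeUntil y hy).support := by
    intro x y hx hy hxy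
    rw [← p.getVert_support_idxOf hx,
      ← getVert_takeUntil hy (by rwa [length_takeUntil])]
    exact getVert_mem_support _ _
  rcases le_total (p.support.idxOf u) (p.support.idxOf w) with h | h
  · exact .inl (key hu hw h)
  · exact .inr (key hw hu h)

lemma IsPath.eq_of_mem_takeUntil_of_mem_dropUntil {p : H.Walk a b} (hp : p.IsPath)
    (hu : u ∈ p.support) (hw₁ : w ∈ (p.takeUntil u hu).support)
    (hw₂ : w ∈ (p.dropUntil u hu).support) : w = u := by
  by_contra hwu
  have hnodup : ((p.takeUntil u hu).support ++ (p.dropUntil u hu).support.tail).Nodup := by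
    rw [← support_append, p.take_spec hu]
    exact hp.support_nodup
  rw [← cons_tail_support, List.mem_cons] at hw₂
  exact List.disjoint_of_nodup_append hnodup hw₁ (hw₂.resolve_left hwu)

end SimpleGraph.Walk

namespace SimpleGraph.ComponentCompl

variable {G : SimpleGraph V} {K : Set V} {c d : V}

lemma eq_of_mem_of_mem {C D : G.ComponentCompl K} (hC : c ∈ C) (hD : c ∈ D) : C = D := by
  obtain ⟨_, rfl⟩ := hC
  obtain ⟨_, rfl⟩ := hD
  rfl

lemma mem_of_walk {C : G.ComponentCompl K} (hc : c ∈ C) (W : G.Walk c d)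
    (hW : ∀ x ∈ W.support, x ∉ K) : d ∈ C := by
  induction W with
  | nil => exact hc
  | cons hadj W ih =>
    simp only [Walk.support_cons, List.mem_cons, forall_eq_or_imp] at hW
    exact ih (mem_of_adj _ _ hc (hW.2 _ W.start_mem_support) hadj) hW.2

lemma exists_walk_of_mem {C : G.ComponentCompl K} (hc : c ∈ C) (hd : d ∈ C) :
    ∃ W : G.Walk c d, ∀ x ∈ W.support, x ∉ K := by
  obtain ⟨hcK, rfl⟩ := hc
  obtain ⟨hdK, hd⟩ := hd
  obtain ⟨W⟩ := ConnectedComponent.exact hd.symm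
  refine ⟨W.map (Embedding.induce Kᶜ).toHom, fun x hx => ?_⟩
  obtain ⟨y, -, rfl⟩ := List.mem_map.1 ((W.support_map _) ▸ hx)
  exact y.2

end SimpleGraph.ComponentCompl

namespace Ray

variable {G : SimpleGraph V}

theorem ext : ∀ {R S : Ray G}, R.f = S.f → R = S
  | ⟨_, _, _⟩, ⟨_, _, _⟩, rfl => rfl

lemma exists_tailIn_componentCompl (R : Ray G) (X : Finset V) :
    ∃ C : G.ComponentCompl (X : Set V), R.TailIn C := by
  have hfin : {n | R.f n ∈ (X : Set V)}.Finite := X.finite_toSet.preimage R.inj.injOn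
  obtain ⟨M, hM⟩ := Filter.eventually_atTop.1
    (Nat.cofinite_eq_atTop ▸ hfin.eventually_cofinite_notMem)
  refine ⟨G.componentComplMk (hM M le_rfl), M, fun n hn => ?_⟩
  induction n, hn using Nat.le_induction with
  | base => exact G.componentComplMk_mem _
  | succ n hn ih => exact ComponentCompl.mem_of_adj _ _ ih (hM _ (by omega)) (R.adj n)

lemma eq_of_tailIn_of_tailIn {R : Ray G} {K : Set V} {C D : G.ComponentCompl K}
    (hC : R.TailIn C) (hD : R.TailIn D) : C = D := by
  obtain ⟨m, hm⟩ := hC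
  obtain ⟨n, hn⟩ := hD
  exact ComponentCompl.eq_of_mem_of_mem (hm _ (le_max_left m n)) (hn _ (le_max_right m n))

noncomputable def tailComp (R : Ray G) (X : Finset V) : G.ComponentCompl (X : Set V) :=
  (R.exists_tailIn_componentCompl X).choose

lemma tailIn_tailComp (R : Ray G) (X : Finset V) : R.TailIn (R.tailComp X) :=
  (R.exists_tailIn_componentCompl X).choose_spec

lemma tailComp_subset_tailComp (R : Ray G) {X Y : Finset V} (h : X ⊆ Y) :
    (R.tailComp Y : Set V) ⊆ R.tailComp X := by
  have hXY : (X : Set V) ⊆ Y := Finset.coe_subset.2 h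
  obtain ⟨n, hn⟩ := R.tailIn_tailComp Y
  have : (R.tailComp Y).hom hXY = R.tailComp X :=
    eq_of_tailIn_of_tailIn ⟨n, fun m hm => (R.tailComp Y).subset_hom hXY (hn m hm)⟩
      (R.tailIn_tailComp X)
  exact this ▸ (R.tailComp Y).subset_hom hXY

end Ray

section RayEquiv

variable {G : SimpleGraph V}

lemma rayEquiv_refl (R : Ray G) : RayEquiv G R R := fun X =>
  (R.exists_tailIn_componentCompl X).imp fun _ hC => ⟨hC, hC⟩

lemma rayEquiv_symm {R S : Ray G} (h : RayEquiv G R S) : RayEquiv G S R := fun X =>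
  (h X).imp fun _ hC => hC.symm

lemma rayEquiv_trans {R S T : Ray G} (h₁ : RayEquiv G R S) (h₂ : RayEquiv G S T) :
    RayEquiv G R T := fun X => by
  obtain ⟨C, hRC, hSC⟩ := h₁ X
  obtain ⟨D, hSD, hTD⟩ := h₂ X
  exact ⟨C, hRC, Ray.eq_of_tailIn_of_tailIn hSD hSC ▸ hTD⟩

lemma livesIn_end_tailComp (R : Ray G) (X : Finset V) : LivesIn (R.end G) X (R.tailComp X) :=
  fun S hS => by
    obtain ⟨C, hRC, hSC⟩ := hS X
    rwa [Ray.eq_of_tailIn_of_tailIn (R.tailIn_tailComp X) hRC]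

lemma InClosureOf.exists_mem_tailComp {R : Ray G} {M : Set V} (h : InClosureOf (R.end G) M)
    (X : Finset V) : ∃ x : M, x.1 ∈ R.tailComp X :=
  let ⟨x, hxC, hxM⟩ := h X _ (livesIn_end_tailComp R X)
  ⟨⟨x, hxM⟩, hxC⟩

end RayEquiv

namespace NormalTree

variable {G : SimpleGraph V} (N : NormalTree G)

def rt : N.T.verts := ⟨N.root, N.root_mem⟩

noncomputable def pathTo (v : N.T.verts) : N.T.coe.Walk N.rt v :=
  (N.isTree.existsUnique_path N.rt v).choose

lemma isPath_pathTo (v : N.T.verts) : (N.pathTo v).IsPath :=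
  (N.isTree.existsUnique_path N.rt v).choose_spec.1

variable {N} {u v w t : N.T.verts}

lemma eq_pathTo {p : N.T.coe.Walk N.rt v} (hp : p.IsPath) : p = N.pathTo v :=
  (N.isTree.existsUnique_path N.rt v).choose_spec.2 p hp

lemma le_iff_mem_support : N.Le u v ↔ u ∈ (N.pathTo v).support :=
  ⟨fun h => h _ (N.isPath_pathTo v), fun h _ hP => eq_pathTo hP ▸ h⟩

lemma takeUntil_pathTo (h : u ∈ (N.pathTo v).support) :
    (N.pathTo v).takeUntil u h = N.pathTo u :=
  eq_pathTo ((N.isPath_pathTo v).takeUntil h)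

lemma le_refl (v : N.T.verts) : N.Le v v :=
  le_iff_mem_support.2 (Walk.end_mem_support _)

lemma rt_le (v : N.T.verts) : N.Le N.rt v :=
  le_iff_mem_support.2 (Walk.start_mem_support _)

lemma le_trans (huv : N.Le u v) (hvw : N.Le v w) : N.Le u w := by
  rw [le_iff_mem_support] at huv hvw ⊢
  rw [← takeUntil_pathTo hvw] at huv
  exact (N.pathTo w).support_takeUntil_subset_support hvw huv

lemma le_antisymm (huv : N.Le u v) (hvu : N.Le v u) : u = v := by
  by_contra hne
  rw [le_iff_mem_support] at huv hvu
  have h₁ := (N.pathTo v).length_takeUntil_lt_length huv hne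
  have h₂ := (N.pathTo u).length_takeUntil_le_length hvu
  rw [takeUntil_pathTo] at h₁ h₂
  omega

lemma le_total_of_le (huw : N.Le u w) (hvw : N.Le v w) : N.Le u v ∨ N.Le v u := by
  simp only [le_iff_mem_support] at huw hvw ⊢
  rcases (N.pathTo w).mem_support_takeUntil_or huw hvw with h | h
  · exact .inl (takeUntil_pathTo hvw ▸ h)
  · exact .inr (takeUntil_pathTo huw ▸ h)

lemma le_of_mem_dropUntil (h : u ∈ (N.pathTo v).support)
    (hw : w ∈ ((N.pathTo v).dropUntil u h).support) : N.Le u w := by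
  have hw' := (N.pathTo v).support_dropUntil_subset_support h hw
  rw [le_iff_mem_support]
  rcases (N.pathTo v).mem_support_takeUntil_or h hw' with h' | h'
  · exact takeUntil_pathTo hw' ▸ h'
  · rw [(N.isPath_pathTo v).eq_of_mem_takeUntil_of_mem_dropUntil h h' hw]
    exact Walk.end_mem_support _

lemma pathTo_concat (hadj : N.T.coe.Adj v w) (hwv : ¬ N.Le w v) :
    N.pathTo w = (N.pathTo v).concat hadj :=
  (eq_pathTo ((N.isPath_pathTo v).concat (le_iff_mem_support.not.1 hwv) hadj)).symm

lemma le_iff_of_adj (hadj : N.T.coe.Adj v w) (hwv : ¬ N.Le w v) :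
    N.Le u w ↔ N.Le u v ∨ u = w := by
  rw [le_iff_mem_support, le_iff_mem_support, pathTo_concat hadj hwv, Walk.support_concat,
    List.mem_append, List.mem_singleton]

variable (N) in
noncomputable def downClosure (v : N.T.verts) : Finset V :=
  ((N.pathTo v).support.map Subtype.val).toFinset

lemma val_mem_downClosure : u.1 ∈ N.downClosure v ↔ N.Le u v := by
  simp [downClosure, le_iff_mem_support]

lemma downClosure_mono (huv : N.Le u v) : N.downClosure u ⊆ N.downClosure v := by
  intro x hx
  obtain ⟨y, hy, rfl⟩ : ∃ y ∈ (N.pathTo u).support, y.1 = x := by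
    simpa [downClosure] using hx
  exact val_mem_downClosure.2 (le_trans (le_iff_mem_support.2 hy) huv)

noncomputable def succToward (hvt : N.Le v t) : N.T.verts :=
  ((N.pathTo t).dropUntil v (le_iff_mem_support.1 hvt)).snd

section Successor

variable (hvt : N.Le v t)

lemma adj_succToward (hne : v ≠ t) : N.T.coe.Adj v (succToward hvt) :=
  Walk.adj_snd (Walk.not_nil_of_ne hne)

lemma succToward_mem_dropUntil :
    succToward hvt ∈ ((N.pathTo t).dropUntil v (le_iff_mem_support.1 hvt)).support :=
  Walk.getVert_mem_support _ _

lemma le_succToward : N.Le v (succToward hvt) :=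
  le_of_mem_dropUntil _ (succToward_mem_dropUntil hvt)

lemma succToward_le : N.Le (succToward hvt) t :=
  le_iff_mem_support.2 (Walk.support_dropUntil_subset_support _ _ (succToward_mem_dropUntil hvt))

lemma not_succToward_le (hne : v ≠ t) : ¬ N.Le (succToward hvt) v := fun h =>
  (adj_succToward hvt hne).ne (le_antisymm (le_succToward hvt) h)

end Successor

lemma mem_componentCompl_of_le {K : Set V} {C : G.ComponentCompl K} (hwt : N.Le w t)
    (ht : t.1 ∈ C) (hK : ∀ y : N.T.verts, N.Le w y → y.1 ∉ K) : w.1 ∈ C := by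
  let Q := (N.pathTo t).dropUntil w (le_iff_mem_support.1 hwt)
  refine C.mem_of_walk ht (Q.reverse.map N.T.hom) fun x hx => ?_
  replace hx : x ∈ (Q.reverse.map N.T.hom).support := hx
  rw [Walk.support_map, Walk.support_reverse, List.mem_map] at hx
  obtain ⟨y, hy, rfl⟩ := hx
  exact hK y (le_of_mem_dropUntil _ (List.mem_reverse.1 hy))

section Normality

variable {K : Set V}

lemma le_iff_le_of_le (hw : ∀ s : N.T.verts, s.1 ∉ K → N.Le s w → s = w) (hu : u.1 ∉ K)
    (huv : N.Le u v) : N.Le w u ↔ N.Le w v := by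
  refine ⟨fun h => le_trans h huv, fun h => ?_⟩
  rcases le_total_of_le h huv with h' | h'
  · exact h'
  · rw [hw u hu h']
    exact le_refl w

lemma le_iff_le_of_walk (hw : ∀ s : N.T.verts, s.1 ∉ K → N.Le s w → s = w) {a b : N.T.verts}
    (W : G.Walk a.1 b.1) (hW : ∀ x ∈ W.support, x ∉ K) : N.Le w a ↔ N.Le w b := by
  induction hn : W.length using Nat.strong_induction_on generalizing a b with
  | _ n ih =>
  by_cases hab : a = b
  · rw [hab]
  have hWK : ∀ x ∈ W.bypass.support, x ∉ K := fun x hx =>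
    hW x (W.support_bypass_subset_support hx)
  by_cases hint : ∃ x ∈ W.bypass.support, x ≠ a.1 ∧ x ≠ b.1 ∧ x ∈ N.T.verts
  · obtain ⟨x, hx, hxa, hxb, hxT⟩ := hint
    have hlen := W.length_bypass_le_length
    have h₁ := W.bypass.length_takeUntil_lt_length hx hxb
    have h₂ := W.bypass.length_dropUntil_lt_length hx hxa
    refine (ih _ (by omega) (a := a) (b := ⟨x, hxT⟩) (W.bypass.takeUntil x hx)
      (fun y hy => hWK y (W.bypass.support_takeUntil_subset_support hx hy)) rfl).trans
      (ih _ (by omega) (a := ⟨x, hxT⟩) (W.bypass.dropUntil x hx)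
      (fun y hy => hWK y (W.bypass.support_dropUntil_subset_support hx hy)) rfl)
  · -- `W.bypass` is a `T`-path, so its ends are comparable
    push Not at hint
    have hpos : 0 < W.bypass.length := Nat.pos_of_ne_zero fun h =>
      hab (Subtype.ext (Walk.eq_of_length_eq_zero h))
    rcases N.normal a b W.bypass W.bypass_isPath hpos hint with h | h
    · exact le_iff_le_of_le hw (hW _ W.start_mem_support) h
    · exact (le_iff_le_of_le hw (hW _ W.end_mem_support) h).symm

lemma le_iff_le_of_mem_componentCompl (hw : ∀ s : N.T.verts, s.1 ∉ K → N.Le s w → s = w)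
    {C : G.ComponentCompl K} {a b : N.T.verts} (ha : a.1 ∈ C) (hb : b.1 ∈ C) :
    N.Le w a ↔ N.Le w b :=
  let ⟨W, hW⟩ := ComponentCompl.exists_walk_of_mem ha hb
  le_iff_le_of_walk hw W hW

end Normality

section NormalRay

variable {R : Ray G} (hR : N.IsNormalRay R)

def rayVert (n : ℕ) : N.T.verts := ⟨R.f n, (hR.2 n).fst_mem⟩

lemma adj_rayVert (n : ℕ) : N.T.coe.Adj (rayVert hR n) (rayVert hR (n + 1)) := hR.2 n

lemma le_rayVert_iff {s : N.T.verts} {n : ℕ} :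
    N.Le s (rayVert hR n) ↔ ∃ i ≤ n, s = rayVert hR i := by
  induction n generalizing s with
  | zero =>
    have h0 : rayVert hR 0 = N.rt := Subtype.ext hR.1
    refine ⟨fun h => ⟨0, le_rfl, ?_⟩, fun ⟨i, hi, hs⟩ => ?_⟩
    · exact le_antisymm h (h0 ▸ rt_le s)
    · obtain rfl : i = 0 := by omega
      exact hs ▸ le_refl _
  | succ n ih =>
    have hnot : ¬ N.Le (rayVert hR (n + 1)) (rayVert hR n) := by
      rw [ih]
      rintro ⟨i, hi, h⟩
      have := R.inj (congrArg Subtype.val h)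
      omega
    rw [le_iff_of_adj (adj_rayVert hR n) hnot, ih]
    constructor
    · rintro (⟨i, hi, rfl⟩ | rfl)
      exacts [⟨i, by omega, rfl⟩, ⟨n + 1, le_rfl, rfl⟩]
    · rintro ⟨i, hi, rfl⟩
      rcases Nat.lt_or_eq_of_le hi with hi | rfl
      exacts [.inl ⟨i, by omega, rfl⟩, .inr rfl]

end NormalRay

namespace IsNormalRay

variable {R S : Ray G}

lemma inClosureOf (hR : N.IsNormalRay R) : InClosureOf (R.end G) N.T.verts :=
  fun _ _ hC =>
    let ⟨n, hn⟩ := hC R (rayEquiv_refl R)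
    ⟨R.f n, hn n le_rfl, (hR.2 n).fst_mem⟩

lemma eq_of_rayEquiv (hR : N.IsNormalRay R) (hS : N.IsNormalRay S) (h : RayEquiv G R S) :
    R = S := by
  by_contra hne
  have hdiff : ∃ n, R.f n ≠ S.f n := by
    by_contra! h
    exact hne (Ray.ext (funext h))
  let k := Nat.find hdiff
  have hk : R.f k ≠ S.f k := Nat.find_spec hdiff
  have hagree : ∀ i < k, R.f i = S.f i := fun i hi => not_not.1 (Nat.find_min hdiff hi)
  let X := (Finset.range k).image R.f
  have hw : ∀ s : N.T.verts, s.1 ∉ (X : Set V) → N.Le s (rayVert hR k) →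
      s = rayVert hR k := by
    intro s hs hsk
    obtain ⟨i, hi, rfl⟩ := (le_rayVert_iff hR).1 hsk
    rcases Nat.lt_or_eq_of_le hi with hi | rfl
    · exact absurd (Finset.mem_image_of_mem _ (Finset.mem_range.2 hi)) hs
    · rfl
  obtain ⟨C, ⟨a, ha⟩, ⟨b, hb⟩⟩ := h X
  have hRS : N.Le (rayVert hR k) (rayVert hS (max b k)) :=
    (le_iff_le_of_mem_componentCompl hw (ha (max a k) (le_max_left _ _))
      (hb (max b k) (le_max_left _ _))).1 ((le_rayVert_iff hR).2 ⟨k, le_max_right _ _, rfl⟩)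
  obtain ⟨i, -, hi⟩ := (le_rayVert_iff hS).1 hRS
  have hRi : R.f k = S.f i := congrArg Subtype.val hi
  have hki : k < i := by
    rcases lt_trichotomy i k with hik | rfl | hik
    · exact absurd (R.inj (hRi.trans (hagree i hik).symm)) hik.ne'
    · exact absurd hRi hk
    · exact hik
  obtain ⟨j, hj, hSj⟩ := (le_rayVert_iff hR).1
    (hi ▸ (le_rayVert_iff hS).2 ⟨k, hki.le, rfl⟩ : N.Le (rayVert hS k) (rayVert hR k))
  have hSk : S.f k = R.f j := congrArg Subtype.val hSj
  rcases Nat.lt_or_eq_of_le hj with hj | rfl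
  · exact absurd (S.inj (hSk.trans (hagree j hj))) hj.ne'
  · exact hk hSk.symm

end IsNormalRay

lemma le_of_chain {c : ℕ → N.T.verts} (hle : ∀ n, N.Le (c n) (c (n + 1))) {m n : ℕ}
    (hmn : m ≤ n) : N.Le (c m) (c n) := by
  induction n, hmn using Nat.le_induction with
  | base => exact le_refl _
  | succ n _ ih => exact le_trans ih (hle n)

lemma injective_of_chain {c : ℕ → N.T.verts} (hadj : ∀ n, N.T.coe.Adj (c n) (c (n + 1)))
    (hle : ∀ n, N.Le (c n) (c (n + 1))) : Function.Injective c :=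
  Function.Injective.of_lt_imp_ne fun m _ hmn heq =>
    (hadj m).ne (le_antisymm (hle m) (heq ▸ le_of_chain hle hmn))

variable (N) (R₀ : Ray G)

-- the invariant maintained while climbing the tree towards the end of `R₀`
def LeTailComp (v : N.T.verts) : Prop :=
  ∀ t : N.T.verts, t.1 ∈ R₀.tailComp (N.downClosure v) → N.Le v t

lemma exists_adj_forall_tailComp_le (hω : InClosureOf (R₀.end G) N.T.verts) {v : N.T.verts}
    (hv : N.LeTailComp R₀ v) :
    ∃ w, N.T.coe.Adj v w ∧ N.Le v w ∧
      ∀ t : N.T.verts, t.1 ∈ R₀.tailComp (N.downClosure v) → N.Le w t := by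
  obtain ⟨t₀, ht₀⟩ := hω.exists_mem_tailComp (N.downClosure v)
  have hvt₀ := hv t₀ ht₀
  have hne : v ≠ t₀ := by
    rintro rfl
    exact ComponentCompl.notMem_of_mem ht₀ (val_mem_downClosure.2 (le_refl v))
  have hwv := not_succToward_le hvt₀ hne
  -- the successor of `v` towards `t₀` is joined to `t₀` through the tree above it
  have hwC : (succToward hvt₀).1 ∈ R₀.tailComp (N.downClosure v) :=
    mem_componentCompl_of_le (succToward_le hvt₀) ht₀ fun y hy hyv =>
      hwv (le_trans hy (val_mem_downClosure.1 hyv))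
  refine ⟨_, adj_succToward hvt₀ hne, le_succToward hvt₀, fun t ht =>
    (le_iff_le_of_mem_componentCompl (fun s hs hsw => ?_) hwC ht).1 (le_refl _)⟩
  exact ((le_iff_of_adj (adj_succToward hvt₀ hne) hwv).1 hsw).resolve_left
    fun h => hs (val_mem_downClosure.2 h)

lemma exists_chain_tailComp (hω : InClosureOf (R₀.end G) N.T.verts) :
    ∃ c : ℕ → N.T.verts, c 0 = N.rt ∧
    ∀ n, N.T.coe.Adj (c n) (c (n + 1)) ∧ N.Le (c n) (c (n + 1)) ∧
      ∀ t : N.T.verts, t.1 ∈ R₀.tailComp (N.downClosure (c n)) → N.Le (c (n + 1)) t := by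
  choose! next hadj hle habove using
    fun v (hv : N.LeTailComp R₀ v) => N.exists_adj_forall_tailComp_le R₀ hω hv
  have hinv : ∀ n, N.LeTailComp R₀ (next^[n] N.rt) := by
    intro n
    induction n with
    | zero => exact fun t _ => rt_le t
    | succ n ih =>
      rw [Function.iterate_succ_apply']
      exact fun t ht =>
        habove _ ih t (R₀.tailComp_subset_tailComp (downClosure_mono (hle _ ih)) ht)
  refine ⟨fun n => next^[n] N.rt, rfl, fun n => ?_⟩
  simp only [Function.iterate_succ_apply']
  exact ⟨hadj _ (hinv n), hle _ (hinv n), habove _ (hinv n)⟩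

lemma tailIn_tailComp_of_chain (hω : InClosureOf (R₀.end G) N.T.verts)
    {c : ℕ → N.T.verts} (hadj : ∀ n, N.T.coe.Adj (c n) (c (n + 1)))
    (hle : ∀ n, N.Le (c n) (c (n + 1)))
    (habove : ∀ n, ∀ t : N.T.verts, t.1 ∈ R₀.tailComp (N.downClosure (c n)) →
      N.Le (c (n + 1)) t)
    (X : Finset V) : ∃ p, ∀ n, p ≤ n → (c n).1 ∈ R₀.tailComp X := by
  -- the chain eventually leaves the finite down-closure of `X`
  let U := ((X.subtype (· ∈ N.T.verts)).biUnion N.downClosure)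
  have hfin : {n | (c n).1 ∈ U}.Finite :=
    U.finite_toSet.preimage (Subtype.val_injective.comp (injective_of_chain hadj hle)).injOn
  obtain ⟨p, hp⟩ := Filter.eventually_atTop.1
    (Nat.cofinite_eq_atTop ▸ hfin.eventually_cofinite_notMem)
  have hpX : ∀ n, p ≤ n → ∀ y : N.T.verts, N.Le (c n) y → y.1 ∉ X :=
    fun n hn y hy hyX =>
    hp n hn (Finset.mem_biUnion.2 ⟨y, Finset.mem_subtype.2 hyX, val_mem_downClosure.2 hy⟩)
  refine ⟨p + 1, fun n hn => ?_⟩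
  obtain ⟨j, rfl⟩ : ∃ j, n = j + 1 := ⟨n - 1, by omega⟩
  obtain ⟨t₀, ht₀⟩ := hω.exists_mem_tailComp (X ∪ N.downClosure (c j))
  refine R₀.tailComp_subset_tailComp Finset.subset_union_left
    (mem_componentCompl_of_le (habove j t₀ ?_) ht₀ fun y hy hyY => ?_)
  · exact R₀.tailComp_subset_tailComp Finset.subset_union_right ht₀
  rcases Finset.mem_union.1 hyY with hyX | hyc
  · exact hpX (j + 1) (by omega) y hy hyX
  · exact (hadj j).ne (le_antisymm (hle j) (le_trans hy (val_mem_downClosure.1 hyc)))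

lemma exists_isNormalRay_rayEquiv (hω : InClosureOf (R₀.end G) N.T.verts) :
    ∃ R : Ray G, N.IsNormalRay R ∧ RayEquiv G R₀ R := by
  obtain ⟨c, hc0, hc⟩ := N.exists_chain_tailComp R₀ hω
  choose hadj hle habove using hc
  refine ⟨⟨fun n => (c n).1, Subtype.val_injective.comp (injective_of_chain hadj hle),
    fun n => (hadj n).adj_sub⟩, ⟨congrArg Subtype.val hc0, hadj⟩, fun X =>
      ⟨R₀.tailComp X, R₀.tailIn_tailComp X,
        N.tailIn_tailComp_of_chain R₀ hω hadj hle habove X⟩⟩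

end NormalTree

/-- Every end of `G` in the closure of a normal tree `T ⊆ G` contains exactly
one normal ray of `T`, and the ends in the closure of `T` correspond
bijectively to the normal rays of `T`. -/
theorem stmt_10 {V : Type u} (G : SimpleGraph V) (N : NormalTree G) :
    (∀ ω : Ends G, InClosureOf ω N.T.verts →
      ∃! R : Ray G, N.IsNormalRay R ∧ R ∈ ω.1) ∧
    (∀ R : Ray G, N.IsNormalRay R → InClosureOf (R.end G) N.T.verts) ∧
    (∀ R S : Ray G, N.IsNormalRay R → N.IsNormalRay S → RayEquiv G R S → R = S) := by
  refine ⟨fun ω hω => ?_, fun R hR => hR.inClosureOf, fun R S hR hS => hR.eq_of_rayEquiv hS⟩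
  obtain ⟨R₀, hR₀⟩ := ω.2
  obtain rfl : ω = R₀.end G := Subtype.ext hR₀
  obtain ⟨R, hR, hR₀R⟩ := N.exists_isNormalRay_rayEquiv R₀ hω
  exact ⟨R, ⟨hR, hR₀R⟩, fun S ⟨hS, hR₀S⟩ =>
    hS.eq_of_rayEquiv hR (rayEquiv_trans (rayEquiv_symm hR₀S) hR₀R)⟩
end

section
/- There exists a connected graph G such that every direction of G is countably determined in G, but G itself is not countably determined; moreover the end space of G is compact and first countable at every end, but not separable (hence neither second countable nor metrisable). Such a G is obtained from the infinite binary tree T₂ by adding, for each rooted ray R of T₂, a disjoint new ray R′ whose first vertex is joined to all vertices of R. -/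
/-! Common definitions: rays, ends (à la Halin), the end space, directions
(via Mathlib's `SimpleGraph.end`), domination, generalised paths, etc. -/

open Classical SimpleGraph

universe u

variable {V : Type u}

/-- The first `n` values of `σ` as a list: the `n`-th vertex of the rooted ray
of the binary tree corresponding to `σ`. -/
def pre2 (σ : ℕ → Bool) : ℕ → List Bool
  | 0 => []
  | n + 1 => pre2 σ n ++ [σ n]

lemma pre2_length (σ : ℕ → Bool) (n : ℕ) : (pre2 σ n).length = n := by
  induction n with
  | zero => rfl
  | succ n ih => simp [pre2, ih]

/-- Vertices: the binary tree `T₂` (finite 0-1 sequences) together with, for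
every rooted ray `σ` of `T₂`, the vertices `(σ, n)` of the new ray `R'_σ`. -/
abbrev BTV : Type := List Bool ⊕ ((ℕ → Bool) × ℕ)

/-- Edges: tree edges of `T₂`; ray edges of each `R'_σ`; and the first vertex
`(σ, 0)` of `R'_σ` joined to every vertex of the rooted ray `R_σ`. -/
def btRel : BTV → BTV → Prop := fun x y =>
  (∃ (s : List Bool) (b : Bool), x = Sum.inl s ∧ y = Sum.inl (s ++ [b])) ∨
  (∃ (σ : ℕ → Bool) (n : ℕ), x = Sum.inr (σ, n) ∧ y = Sum.inr (σ, n + 1)) ∨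
  (∃ (σ : ℕ → Bool) (n : ℕ), x = Sum.inr (σ, 0) ∧ y = Sum.inl (pre2 σ n))

/-- The graph of Example 4.1. -/
def GBT : SimpleGraph BTV := SimpleGraph.fromRel btRel

/-!
Every direction of `GBT` is the direction of a branch `R_σ` of the binary tree or of the added
ray `R'_σ`: follow the direction down the tree to find `σ`, then look at the separators
`branchSep σ m` (the first `m + 2` vertices of `R_σ` and the first `m + 1` vertices of `R'_σ`).
These countably many separators pin the direction down. A separator can only tell `R_σ` from
`R'_σ` if it meets `R'_σ`, and a countable family of finite separators meets only countably many
of the uncountably many rays `R'_σ`; so `GBT` is not countably determined.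

An end is determined by the direction of its rays, so the same dichotomy holds for ends. In the
end space every end `η_σ` of `R'_σ` is isolated, so the end space has uncountably many
isolated points and is not separable, while the separators `branchSep σ m` give a countable
neighbourhood base at the end `ω_σ` of `R_σ`. Compactness is a König argument: an open cover
without finite subcover yields a branch `σ` none of whose cones is finitely covered, but one
member of the cover around `ω_σ` and one containing `η_σ` together cover all ends above a deep
enough vertex of `R_σ`.
-/

section ComponentSets

variable {G : SimpleGraph V} {W K : Set V} {a b c : V}

inductive ReachIn (G : SimpleGraph V) (W : Set V) : V → V → Prop
  | refl {a : V} (h : a ∈ W) : ReachIn G W a a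
  | tail {a b c : V} (hab : ReachIn G W a b) (hbc : G.Adj b c) (hc : c ∈ W) : ReachIn G W a c

namespace ReachIn

lemma mem_right (h : ReachIn G W a b) : b ∈ W := by
  cases h with
  | refl h => exact h
  | tail _ _ hc => exact hc

lemma trans (h₁ : ReachIn G W a b) (h₂ : ReachIn G W b c) : ReachIn G W a c := by
  induction h₂ with
  | refl _ => exact h₁
  | tail _ hbc hc ih => exact .tail ih hbc hc

lemma symm (h : ReachIn G W a b) : ReachIn G W b a := by
  induction h with
  | refl h => exact .refl h
  | tail hab hbc hc ih => exact (ReachIn.tail (.refl hc) hbc.symm hab.mem_right).trans ih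

lemma reachable (h : ReachIn G W a b) : G.Reachable a b := by
  induction h with
  | refl _ => rfl
  | tail _ hbc _ ih => exact ih.trans hbc.reachable

lemma mem_componentCompl (hWK : Disjoint W K) {C : G.ComponentCompl K} (ha : a ∈ C)
    (h : ReachIn G W a b) : b ∈ C := by
  induction h with
  | refl _ => exact ha
  | tail _ hbc hc ih =>
    exact ComponentCompl.mem_of_adj _ _ ih (Set.disjoint_left.mp hWK hc) hbc

end ReachIn

def PreconnectedIn (G : SimpleGraph V) (W : Set V) : Prop :=
  ∀ a ∈ W, ∀ b ∈ W, ReachIn G W a b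

lemma PreconnectedIn.of_reachIn (h : ∀ b ∈ W, ReachIn G W a b) : PreconnectedIn G W :=
  fun _ hb _ hc => (h _ hb).symm.trans (h _ hc)

lemma PreconnectedIn.subset_componentCompl (hW : PreconnectedIn G W) (hWK : Disjoint W K)
    {C : G.ComponentCompl K} (ha : a ∈ W) (haC : a ∈ C) : W ⊆ C :=
  fun _ hb => (hW a ha _ hb).mem_componentCompl hWK haC

/-- `W` is the vertex set of a component of `G - K`, unless it is empty. -/
structure IsComponentSet (G : SimpleGraph V) (K W : Set V) : Prop where
  disjoint : Disjoint W K
  preconnected : PreconnectedIn G W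
  closed : ∀ a ∈ W, ∀ b, G.Adj a b → b ∈ W ∪ K

namespace IsComponentSet

lemma mono {L : Set V} (hW : IsComponentSet G K W) (hKL : K ⊆ L) (hWL : Disjoint W L) :
    IsComponentSet G L W :=
  ⟨hWL, hW.preconnected, fun a ha b hab => (hW.closed a ha b hab).imp_right (@hKL b)⟩

lemma coe_eq (hW : IsComponentSet G K W) {C : G.ComponentCompl K} (ha : a ∈ W) (haC : a ∈ C) :
    (C : Set V) = W := by
  refine subset_antisymm (fun b hb => ?_) (hW.preconnected.subset_componentCompl hW.disjoint ha haC)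
  obtain ⟨haK, rfl⟩ := haC
  obtain ⟨hbK, hab⟩ := hb
  obtain ⟨p⟩ := ConnectedComponent.exact hab
  suffices ∀ {x y : ↥Kᶜ}, (G.induce Kᶜ).Walk x y → (x : V) ∈ W → (y : V) ∈ W from
    this p.reverse ha
  intro x y p
  induction p with
  | nil => exact id
  | @cons u v w h _ ih =>
    exact fun hx => ih ((hW.closed _ hx _ h).resolve_right v.prop)

end IsComponentSet

end ComponentSets

section Directions

open Filter

variable {G : SimpleGraph V} {W : Set V} {X Y : Finset V}

lemma SimpleGraph.ComponentCompl.eq_of_mem {K : Set V} {C D : G.ComponentCompl K} {v : V}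
    (hC : v ∈ C) (hD : v ∈ D) : C = D := by
  by_contra h
  exact Set.disjoint_left.mp (ComponentCompl.pairwise_disjoint h) hC hD

lemma dirComp_hom (f : G.end) (h : X ⊆ Y) : (dirComp f Y).hom h = dirComp f X :=
  f.2 (CategoryTheory.homOfLE h).op

lemma dirComp_subset (f : G.end) (h : X ⊆ Y) : (dirComp f Y : Set V) ⊆ dirComp f X :=
  dirComp_hom f h ▸ ComponentCompl.subset_hom _ h

lemma end_ext {f g : G.end} (h : ∀ X : Finset V, dirComp f X = dirComp g X) : f = g :=
  Subtype.ext (funext fun K => h K.unop)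

lemma subset_dirComp (f : G.end) (hW : PreconnectedIn G W) (hWX : Disjoint W X)
    (hfY : (dirComp f Y : Set V) = W) : W ⊆ dirComp f X := by
  classical
  obtain ⟨u, hu⟩ := (dirComp f (X ∪ Y)).nonempty
  have huW : u ∈ W := hfY ▸ dirComp_subset f Finset.subset_union_right hu
  exact hW.subset_componentCompl hWX huW (dirComp_subset f Finset.subset_union_left hu)

lemma dirComp_eq_of_coe_dirComp_eq {f g : G.end} (hW : PreconnectedIn G W) (hWX : Disjoint W X)
    (hf : (dirComp f Y : Set V) = W) (hg : (dirComp g Y : Set V) = W) :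
    dirComp f X = dirComp g X := by
  obtain ⟨w, hw⟩ := hf ▸ (dirComp f Y).nonempty
  exact ComponentCompl.eq_of_mem (subset_dirComp f hW hWX hf hw) (subset_dirComp g hW hWX hg hw)

lemma end_ext_of_eventually {f g : G.end} {Y : ℕ → Finset V} {W : ℕ → Set V}
    (hW : ∀ m, PreconnectedIn G (W m))
    (hWX : ∀ X : Finset V, ∀ᶠ m in atTop, Disjoint (W m) X)
    (hf : ∀ᶠ m in atTop, (dirComp f (Y m) : Set V) = W m)
    (hg : ∀ᶠ m in atTop, (dirComp g (Y m) : Set V) = W m) : f = g :=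
  end_ext fun X =>
    let ⟨m, hmX, hmf, hmg⟩ := ((hWX X).and (hf.and hg)).exists
    dirComp_eq_of_coe_dirComp_eq (hW m) hmX hmf hmg

end Directions

namespace Ray

open Filter

variable {G : SimpleGraph V} (R : Ray G) {S : Set V} {X : Finset V}

lemma eventually_notMem (X : Finset V) : ∀ᶠ n in atTop, R.f n ∉ X :=
  Nat.cofinite_eq_atTop ▸ R.inj.tendsto_cofinite.eventually X.eventually_cofinite_notMem

lemma exists_tailIn (X : Finset V) : ∃ C : G.ComponentCompl (X : Set V), R.TailIn C := by
  obtain ⟨N, hN⟩ := eventually_atTop.mp (R.eventually_notMem X)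
  refine ⟨G.componentComplMk (hN N le_rfl), N, fun n hn => ?_⟩
  induction n, hn using Nat.le_induction with
  | base => exact G.componentComplMk_mem _
  | succ n hn ih => exact ComponentCompl.mem_of_adj _ _ ih (hN _ (by omega)) (R.adj n)

variable {R}

lemma TailIn.mono {T : Set V} (h : R.TailIn S) (hST : S ⊆ T) : R.TailIn T :=
  let ⟨N, hN⟩ := h
  ⟨N, fun n hn => hST (hN n hn)⟩

lemma TailIn.exists_mem {T : Set V} (hS : R.TailIn S) (hT : R.TailIn T) :
    ∃ n, R.f n ∈ S ∧ R.f n ∈ T :=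
  ((eventually_atTop.mpr hS).and (eventually_atTop.mpr hT)).exists

lemma TailIn.componentCompl_eq {C D : G.ComponentCompl (X : Set V)} (hC : R.TailIn C)
    (hD : R.TailIn D) : C = D :=
  let ⟨_, hnC, hnD⟩ := hC.exists_mem hD
  ComponentCompl.eq_of_mem hnC hnD

variable (R)

noncomputable def dir : G.end := by
  refine ⟨fun X => (R.exists_tailIn X.unop).choose, fun {K L} φ => ?_⟩
  have hLK : (L.unop : Set V) ⊆ K.unop := by exact_mod_cast CategoryTheory.leOfHom φ.unop
  exact ((R.exists_tailIn _).choose_spec.mono (ComponentCompl.subset_hom _ hLK)).componentCompl_eq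
    (R.exists_tailIn _).choose_spec

lemma tailIn_dirComp (X : Finset V) : R.TailIn (dirComp R.dir X) :=
  (R.exists_tailIn X).choose_spec

variable {R}

lemma dirComp_dir_eq_iff {C : G.ComponentCompl (X : Set V)} : dirComp R.dir X = C ↔ R.TailIn C :=
  ⟨fun h => h ▸ R.tailIn_dirComp X, (R.tailIn_dirComp X).componentCompl_eq⟩

lemma coe_dirComp_dir {W : Set V} (hW : IsComponentSet G X W) (hR : R.TailIn W) :
    (dirComp R.dir X : Set V) = W :=
  let ⟨_, hn, hnW⟩ := (R.tailIn_dirComp X).exists_mem hR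
  hW.coe_eq hnW hn

end Ray

lemma rayEquiv_iff_dir_eq {G : SimpleGraph V} {R S : Ray G} : RayEquiv G R S ↔ R.dir = S.dir := by
  refine ⟨fun h => end_ext fun X => ?_,
    fun h X => ⟨_, R.tailIn_dirComp X, h ▸ S.tailIn_dirComp X⟩⟩
  obtain ⟨C, hR, hS⟩ := h X
  rw [Ray.dirComp_dir_eq_iff.mpr hR, Ray.dirComp_dir_eq_iff.mpr hS]

namespace Ends

variable {G : SimpleGraph V}

noncomputable def dir (ω : Ends G) : G.end := ω.2.choose.dir

lemma mem_iff_dir_eq {ω : Ends G} {R : Ray G} : R ∈ ω.1 ↔ R.dir = ω.dir := by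
  conv_lhs => rw [ω.2.choose_spec]
  exact rayEquiv_iff_dir_eq.trans eq_comm

lemma dir_injective : Function.Injective (dir : Ends G → G.end) := fun ω ω' h =>
  Subtype.ext <| Set.ext fun _ => by rw [mem_iff_dir_eq, mem_iff_dir_eq, h]

lemma mem_basicSet_iff {ω : Ends G} {X : Finset V} {C : G.ComponentCompl (X : Set V)} :
    ω ∈ basicSet G X C ↔ dirComp ω.dir X = C := by
  refine ⟨fun h => Ray.dirComp_dir_eq_iff.mpr (h _ (mem_iff_dir_eq.mpr rfl)), fun h R hR => ?_⟩
  rw [← Ray.dirComp_dir_eq_iff, mem_iff_dir_eq.mp hR, h]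

end Ends

lemma Ray.end_dir {G : SimpleGraph V} (R : Ray G) : (R.end G).dir = R.dir :=
  (Ends.mem_iff_dir_eq.mp (rayEquiv_iff_dir_eq.mpr rfl)).symm

open TopologicalSpace in
lemma isTopologicalBasis_basicSet (G : SimpleGraph V) :
    IsTopologicalBasis {U : Set (Ends G) | ∃ X C, U = basicSet G X C} := by
  classical
  refine ⟨?_, ?_, rfl⟩
  · rintro _ ⟨X₁, C₁, rfl⟩ _ ⟨X₂, C₂, rfl⟩ ω ⟨h₁, h₂⟩
    refine ⟨_, ⟨X₁ ∪ X₂, dirComp ω.dir (X₁ ∪ X₂), rfl⟩, Ends.mem_basicSet_iff.mpr rfl,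
      fun ω' h => ?_⟩
    simp only [Set.mem_inter_iff, Ends.mem_basicSet_iff] at h₁ h₂ h ⊢
    have agree {Y : Finset V} (hY : Y ⊆ X₁ ∪ X₂) : dirComp ω'.dir Y = dirComp ω.dir Y := by
      rw [← dirComp_hom _ hY, h, dirComp_hom]
    exact ⟨(agree Finset.subset_union_left).trans h₁,
      (agree Finset.subset_union_right).trans h₂⟩
  · exact Set.sUnion_eq_univ_iff.mpr fun ω =>
      ⟨_, ⟨∅, dirComp ω.dir ∅, rfl⟩, Ends.mem_basicSet_iff.mpr rfl⟩

lemma exists_forall_pre2 {P : List Bool → Prop} (h₀ : P [])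
    (hstep : ∀ s, P s → ∃ b, P (s ++ [b])) : ∃ σ : ℕ → Bool, ∀ n, P (pre2 σ n) := by
  choose b hb using hstep
  let t : ℕ → {s // P s} := fun n =>
    Nat.rec ⟨[], h₀⟩ (fun _ s => ⟨s.1 ++ [b s.1 s.2], hb _ _⟩) n
  let σ n := b (t n).1 (t n).2
  have ht : ∀ n, (t n).1 = pre2 σ n := by
    intro n
    induction n with
    | zero => rfl
    | succ n ih => exact congrArg (· ++ [σ n]) ih
  exact ⟨σ, fun n => ht n ▸ (t n).2⟩

section Pre2

variable {σ τ : ℕ → Bool} {m n : ℕ}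

lemma pre2_eq_map_range (σ : ℕ → Bool) (n : ℕ) : pre2 σ n = (List.range n).map σ := by
  induction n with
  | zero => rfl
  | succ n ih => simp [pre2, ih, List.range_succ]

lemma pre2_take (h : m ≤ n) : (pre2 σ n).take m = pre2 σ m := by
  rw [pre2_eq_map_range, pre2_eq_map_range, ← List.map_take, List.take_range, min_eq_left h]

lemma pre2_prefix (h : m ≤ n) : pre2 σ m <+: pre2 σ n :=
  pre2_take h ▸ List.take_prefix _ _

lemma eq_pre2_of_prefix {t : List Bool} (h : t <+: pre2 σ n) : t = pre2 σ t.length := by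
  have hlen : t.length ≤ n := pre2_length σ n ▸ h.length_le
  rw [List.prefix_iff_eq_take.mp h, List.length_take, pre2_length, min_eq_left hlen, pre2_take hlen]

lemma pre2_eq_pre2_iff : pre2 σ n = pre2 τ n ↔ ∀ k < n, σ k = τ k := by
  simp [pre2_eq_map_range, List.map_inj_left]

end Pre2

section Adjacency

variable {σ : ℕ → Bool} {t : List Bool} {n : ℕ} {y : BTV}

lemma adj_tree (s : List Bool) (b : Bool) : GBT.Adj (.inl s) (.inl (s ++ [b])) := by
  simp [GBT, btRel]

lemma adj_ray (σ : ℕ → Bool) (n : ℕ) : GBT.Adj (.inr (σ, n)) (.inr (σ, n + 1)) := by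
  simp [GBT, btRel]

lemma adj_spoke (σ : ℕ → Bool) (n : ℕ) : GBT.Adj (.inr (σ, 0)) (.inl (pre2 σ n)) := by
  simp [GBT, btRel]

lemma adj_inl_cases (h : GBT.Adj (.inl t) y) :
    (∃ b, y = .inl (t ++ [b])) ∨ (∃ s b, t = s ++ [b] ∧ y = .inl s) ∨
      (∃ τ m, t = pre2 τ m ∧ y = .inr (τ, 0)) := by
  simp only [GBT, btRel, fromRel_adj] at h
  aesop

lemma adj_inr_cases (h : GBT.Adj (.inr (σ, n)) y) :
    y = .inr (σ, n + 1) ∨ (∃ m, n = m + 1 ∧ y = .inr (σ, m)) ∨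
      (n = 0 ∧ ∃ m, y = .inl (pre2 σ m)) := by
  simp only [GBT, btRel, fromRel_adj] at h
  aesop

end Adjacency

def treeRay (σ : ℕ → Bool) : Ray GBT where
  f n := .inl (pre2 σ n)
  inj a b h := by simpa [pre2_length] using congrArg List.length (Sum.inl_injective h)
  adj n := adj_tree (pre2 σ n) (σ n)

def addedRay (σ : ℕ → Bool) : Ray GBT where
  f n := .inr (σ, n)
  inj a b h := by simpa using h
  adj := adj_ray σ

/-- The part of `GBT` above the tree vertex `s`, without the added rays `R'_τ` for `τ ∈ S`. -/
def cone (s : List Bool) (S : Set (ℕ → Bool)) : Set BTV := fun v =>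
  match v with
  | .inl t => s <+: t
  | .inr (τ, _) => pre2 τ s.length = s ∧ τ ∉ S

def rayTail (σ : ℕ → Bool) (m : ℕ) : Set BTV := {v | ∃ j, m < j ∧ v = .inr (σ, j)}

noncomputable def ancestors (s : List Bool) : Finset BTV :=
  (Finset.range s.length).image fun k => .inl (s.take k)

noncomputable def branchSep (σ : ℕ → Bool) (m : ℕ) : Finset BTV :=
  (Finset.range (m + 2)).image (fun k => .inl (pre2 σ k)) ∪
    (Finset.range (m + 1)).image fun k => .inr (σ, k)

section Pieces

variable {s t : List Bool} {S : Set (ℕ → Bool)} {σ τ : ℕ → Bool} {j m : ℕ} {v : BTV}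

@[simp] lemma mem_cone_inl : Sum.inl t ∈ cone s S ↔ s <+: t := Iff.rfl

@[simp] lemma mem_cone_inr : Sum.inr (τ, j) ∈ cone s S ↔ pre2 τ s.length = s ∧ τ ∉ S :=
  Iff.rfl

@[simp] lemma inl_notMem_rayTail : Sum.inl t ∉ rayTail σ m := by simp [rayTail]

@[simp] lemma mem_rayTail_inr : Sum.inr (τ, j) ∈ rayTail σ m ↔ τ = σ ∧ m < j := by
  simp [rayTail, and_comm, eq_comm]

lemma mem_ancestors : v ∈ ancestors s ↔ ∃ k < s.length, v = .inl (s.take k) := by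
  simp [ancestors, eq_comm]

lemma mem_branchSep : v ∈ branchSep σ m ↔
    (∃ k < m + 2, v = .inl (pre2 σ k)) ∨ ∃ k < m + 1, v = .inr (σ, k) := by
  simp [branchSep, eq_comm]

lemma ancestors_append_singleton (s : List Bool) (b : Bool) :
    ancestors (s ++ [b]) = insert (.inl s) (ancestors s) := by
  ext v
  simp only [mem_ancestors, Finset.mem_insert, List.length_append, List.length_singleton]
  constructor
  · rintro ⟨k, hk, rfl⟩
    rcases Nat.lt_succ_iff_lt_or_eq.mp hk with hk | rfl
    · exact .inr ⟨k, hk, by rw [List.take_append_of_le_length hk.le]⟩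
    · exact .inl (by simp)
  · rintro (rfl | ⟨k, hk, rfl⟩)
    · exact ⟨s.length, by omega, by simp⟩
    · exact ⟨k, by omega, by rw [List.take_append_of_le_length hk.le]⟩

lemma ancestors_subset_branchSep : ancestors (pre2 σ (m + 2)) ⊆ branchSep σ m := by
  intro v hv
  obtain ⟨k, hk, rfl⟩ := mem_ancestors.mp hv
  rw [pre2_length] at hk
  rw [pre2_take hk.le]
  exact mem_branchSep.mpr (.inl ⟨k, hk, rfl⟩)

lemma branchSep_mono {m' : ℕ} (h : m ≤ m') : branchSep σ m ⊆ branchSep σ m' := by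
  intro v hv
  rcases mem_branchSep.mp hv with ⟨k, hk, rfl⟩ | ⟨k, hk, rfl⟩
  exacts [mem_branchSep.mpr (.inl ⟨k, by omega, rfl⟩),
    mem_branchSep.mpr (.inr ⟨k, by omega, rfl⟩)]

end Pieces

section Cones

variable {s : List Bool} {S : Set (ℕ → Bool)} {σ : ℕ → Bool} {m : ℕ}

lemma cone_closed : ∀ a ∈ cone s S, ∀ b, GBT.Adj a b →
    b ∈ cone s S ∪ (↑(ancestors s) ∪ (fun τ => Sum.inr (τ, 0)) '' S) := by
  rintro (t | ⟨τ, n⟩) ha b hab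
  · rcases adj_inl_cases hab with ⟨c, rfl⟩ | ⟨s', c, rfl, rfl⟩ | ⟨τ, k, rfl, rfl⟩
    · exact .inl (ha.trans (List.prefix_append _ _))
    · by_cases hs : s.length ≤ s'.length
      · exact .inl (List.prefix_of_prefix_length_le ha (List.prefix_append _ _) hs)
      · have hlen : (s' ++ [c]).length ≤ s.length := by simp; omega
        have hss' : s = s' ++ [c] := ha.eq_of_length (le_antisymm ha.length_le hlen)
        refine .inr (.inl (mem_ancestors.mpr ⟨s'.length, by simp [hss'], ?_⟩))
        simp [hss']
    · by_cases hτ : τ ∈ S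
      · exact .inr (.inr ⟨τ, hτ, rfl⟩)
      · exact .inl ⟨(eq_pre2_of_prefix ha).symm, hτ⟩
  · obtain ⟨hτs, hτ⟩ := ha
    rcases adj_inr_cases hab with rfl | ⟨k, rfl, rfl⟩ | ⟨rfl, k, rfl⟩
    · exact .inl ⟨hτs, hτ⟩
    · exact .inl ⟨hτs, hτ⟩
    · by_cases hk : k < s.length
      · refine .inr (.inl (mem_ancestors.mpr ⟨k, hk, ?_⟩))
        rw [← hτs, pre2_take hk.le]
      · exact .inl (hτs ▸ pre2_prefix (not_lt.mp hk))

lemma reachIn_cone : ∀ v ∈ cone s S, ReachIn GBT (cone s S) (.inl s) v := by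
  have hs : (Sum.inl s : BTV) ∈ cone s S := List.prefix_refl s
  have tree (u : List Bool) : ReachIn GBT (cone s S) (.inl s) (.inl (s ++ u)) := by
    induction u using List.reverseRecOn with
    | nil => simpa using ReachIn.refl hs
    | append_singleton u c ih =>
      exact .tail ih (List.append_assoc s u [c] ▸ adj_tree (s ++ u) c) (List.prefix_append _ _)
  rintro (t | ⟨τ, n⟩) hv
  · obtain ⟨u, rfl⟩ := hv
    exact tree u
  · obtain ⟨hτs, hτ⟩ := hv
    induction n with
    | zero => exact .tail (.refl hs) (hτs ▸ (adj_spoke τ s.length).symm) ⟨hτs, hτ⟩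
    | succ n ih => exact .tail ih (adj_ray τ n) ⟨hτs, hτ⟩

lemma isComponentSet_cone :
    IsComponentSet GBT (↑(ancestors s) ∪ (fun τ => Sum.inr (τ, 0)) '' S) (cone s S) := by
  refine ⟨Set.disjoint_left.mpr ?_, .of_reachIn reachIn_cone, cone_closed⟩
  rintro v hv (hvs | ⟨τ, hτ, rfl⟩)
  · obtain ⟨k, hk, rfl⟩ := mem_ancestors.mp hvs
    have := (mem_cone_inl.mp hv).length_le
    simp at this
    omega
  · exact hv.2 hτ

lemma mem_cone_nil (v : BTV) : v ∈ cone [] ∅ := by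
  rcases v with t | ⟨τ, n⟩
  · exact List.nil_prefix
  · simp [pre2]

lemma connected_GBT : GBT.Connected :=
  (connected_iff_exists_forall_reachable GBT).mpr
    ⟨.inl [], fun v => (reachIn_cone (S := ∅) v (mem_cone_nil v)).reachable⟩

lemma isComponentSet_cone_ancestors : IsComponentSet GBT (ancestors s) (cone s ∅) := by
  simpa using isComponentSet_cone (s := s) (S := ∅)

lemma isComponentSet_cone_branchSep :
    IsComponentSet GBT (branchSep σ m) (cone (pre2 σ (m + 2)) {σ}) := by
  refine isComponentSet_cone.mono ?_ (Set.disjoint_left.mpr ?_)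
  · rintro v (hv | ⟨τ, rfl, rfl⟩)
    · exact ancestors_subset_branchSep hv
    · exact mem_branchSep.mpr (.inr ⟨0, by omega, rfl⟩)
  · rintro v hv hvY
    rcases mem_branchSep.mp hvY with ⟨k, hk, rfl⟩ | ⟨k, -, rfl⟩
    · have := (mem_cone_inl.mp hv).length_le
      simp [pre2_length] at this
      omega
    · exact hv.2 rfl

lemma isComponentSet_rayTail :
    IsComponentSet GBT {.inr (σ, m)} (rayTail σ m) := by
  refine ⟨Set.disjoint_left.mpr ?_, .of_reachIn (a := .inr (σ, m + 1)) ?_, ?_⟩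
  · rintro _ ⟨j, hj, rfl⟩
    simp
    omega
  · rintro _ ⟨j, hj, rfl⟩
    induction j, hj using Nat.le_induction with
    | base => exact .refl ⟨m + 1, by omega, rfl⟩
    | succ j hj ih => exact .tail ih (adj_ray σ j) ⟨j + 1, by omega, rfl⟩
  · rintro _ ⟨j, hj, rfl⟩ b hab
    rcases adj_inr_cases hab with rfl | ⟨k, rfl, rfl⟩ | ⟨rfl, -⟩
    · exact .inl ⟨j + 1, by omega, rfl⟩
    · by_cases hk : m < k
      · exact .inl ⟨k, hk, rfl⟩
      · exact .inr (by simp; omega)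
    · omega

lemma isComponentSet_rayTail_branchSep : IsComponentSet GBT (branchSep σ m) (rayTail σ m) := by
  refine isComponentSet_rayTail.mono ?_ (Set.disjoint_left.mpr ?_)
  · simpa using mem_branchSep.mpr (.inr ⟨m, by omega, rfl⟩)
  · rintro _ ⟨j, hj, rfl⟩ hv
    rcases mem_branchSep.mp hv with ⟨k, -, h⟩ | ⟨k, hk, h⟩ <;> simp at h
    omega

end Cones

section Eventually

open Filter

variable (σ : ℕ → Bool) (X : Finset BTV)

lemma eventually_disjoint_rayTail : ∀ᶠ m in atTop, Disjoint (rayTail σ m) X := by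
  simp_rw [Set.disjoint_right, Finset.mem_coe]
  refine (eventually_all_finset X).mpr fun v _ => ?_
  rcases v with t | ⟨τ, j⟩
  · exact .of_forall fun _ => inl_notMem_rayTail
  · filter_upwards [eventually_ge_atTop j] with m hm
    simp
    omega

lemma eventually_disjoint_cone : ∀ᶠ m in atTop, Disjoint (cone (pre2 σ (m + 2)) {σ}) X := by
  simp_rw [Set.disjoint_right, Finset.mem_coe]
  refine (eventually_all_finset X).mpr fun v _ => ?_
  rcases v with t | ⟨τ, j⟩
  · filter_upwards [eventually_ge_atTop t.length] with m hm hv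
    have := (mem_cone_inl.mp hv).length_le
    simp [pre2_length] at this
    omega
  · by_cases hτ : τ = σ
    · exact .of_forall fun _ hv => hv.2 hτ
    · obtain ⟨k, hk⟩ := Function.ne_iff.mp hτ
      filter_upwards [eventually_ge_atTop k] with m hm hv
      rw [mem_cone_inr, pre2_length, pre2_eq_pre2_iff] at hv
      exact hk (hv.1 k (by omega))

end Eventually

def LiesAbove (f : GBT.end) (s : List Bool) : Prop := Sum.inl s ∈ dirComp f (ancestors s)

section Trace

variable {f : GBT.end} {s : List Bool}

lemma liesAbove_iff : LiesAbove f s ↔ (dirComp f (ancestors s) : Set BTV) = cone s ∅ :=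
  ⟨fun h => isComponentSet_cone_ancestors.coe_eq (List.prefix_refl s) h,
    fun h => (h ▸ List.prefix_refl s : Sum.inl s ∈ (dirComp f (ancestors s) : Set BTV))⟩

lemma liesAbove_nil (f : GBT.end) : LiesAbove f [] := by
  obtain ⟨v, hv⟩ := (dirComp f (ancestors [])).nonempty
  exact liesAbove_iff.mpr (isComponentSet_cone_ancestors.coe_eq (mem_cone_nil v) hv)

lemma LiesAbove.exists_child (h : LiesAbove f s) : ∃ b, LiesAbove f (s ++ [b]) := by
  classical
  obtain ⟨v, hv⟩ := (dirComp f (insert (.inl s) (ancestors s))).nonempty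
  have hvs : v ∈ cone s ∅ :=
    liesAbove_iff.mp h ▸ dirComp_subset f (Finset.subset_insert _ _) hv
  have hvne : v ≠ .inl s := fun hvs =>
    ComponentCompl.notMem_of_mem hv (by simp [hvs])
  obtain ⟨b, hb⟩ : ∃ b, v ∈ cone (s ++ [b]) ∅ := by
    rcases v with t | ⟨τ, n⟩
    · obtain ⟨_ | ⟨b, u⟩, rfl⟩ := hvs
      · simp at hvne
      · exact ⟨b, u, by simp⟩
    · exact ⟨τ s.length, by simpa [pre2] using hvs.1⟩
  refine ⟨b, liesAbove_iff.mpr (isComponentSet_cone_ancestors.coe_eq hb ?_)⟩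
  rwa [ancestors_append_singleton]

lemma exists_forall_liesAbove (f : GBT.end) :
    ∃ σ : ℕ → Bool, ∀ n, LiesAbove f (pre2 σ n) :=
  exists_forall_pre2 (liesAbove_nil f) fun _ h => h.exists_child

end Trace

section Classification

open Filter

variable {f : GBT.end} {σ : ℕ → Bool} {m : ℕ}

lemma LiesAbove.coe_dirComp_branchSep (h : LiesAbove f (pre2 σ (m + 2))) :
    (dirComp f (branchSep σ m) : Set BTV) = rayTail σ m ∨
      (dirComp f (branchSep σ m) : Set BTV) = cone (pre2 σ (m + 2)) {σ} := by
  obtain ⟨z, hz⟩ := (dirComp f (branchSep σ m)).nonempty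
  have hzc : z ∈ cone (pre2 σ (m + 2)) ∅ :=
    liesAbove_iff.mp h ▸ dirComp_subset f ancestors_subset_branchSep hz
  have hzY : z ∉ branchSep σ m := ComponentCompl.notMem_of_mem hz
  rcases z with t | ⟨τ, j⟩
  · exact .inr (isComponentSet_cone_branchSep.coe_eq hzc hz)
  · by_cases hτ : τ = σ
    · subst hτ
      have hj : m < j := by
        by_contra hj
        exact hzY (mem_branchSep.mpr (.inr ⟨j, by omega, rfl⟩))
      exact .inl (isComponentSet_rayTail_branchSep.coe_eq (by simpa using hj) hz)
    · exact .inr (isComponentSet_cone_branchSep.coe_eq (mem_cone_inr.mpr ⟨hzc.1, hτ⟩) hz)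

lemma treeRay_tailIn_cone (σ : ℕ → Bool) (m : ℕ) :
    (treeRay σ).TailIn (cone (pre2 σ (m + 2)) {σ}) :=
  ⟨m + 2, fun _ hn => pre2_prefix hn⟩

lemma addedRay_tailIn_rayTail (σ : ℕ → Bool) (m : ℕ) : (addedRay σ).TailIn (rayTail σ m) :=
  ⟨m + 1, fun n hn => ⟨n, hn, rfl⟩⟩

lemma coe_dirComp_treeRay (σ : ℕ → Bool) (m : ℕ) :
    (dirComp (treeRay σ).dir (branchSep σ m) : Set BTV) = cone (pre2 σ (m + 2)) {σ} :=
  Ray.coe_dirComp_dir isComponentSet_cone_branchSep (treeRay_tailIn_cone σ m)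

lemma coe_dirComp_addedRay (σ : ℕ → Bool) (m : ℕ) :
    (dirComp (addedRay σ).dir (branchSep σ m) : Set BTV) = rayTail σ m :=
  Ray.coe_dirComp_dir isComponentSet_rayTail_branchSep (addedRay_tailIn_rayTail σ m)

lemma eq_treeRay_dir_of_eventually
    (h : ∀ᶠ m in atTop, (dirComp f (branchSep σ m) : Set BTV) = cone (pre2 σ (m + 2)) {σ}) :
    f = (treeRay σ).dir :=
  end_ext_of_eventually (fun _ => isComponentSet_cone_branchSep.preconnected)
    (eventually_disjoint_cone σ) h (.of_forall (coe_dirComp_treeRay σ))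

lemma eq_addedRay_dir_of_eventually
    (h : ∀ᶠ m in atTop, (dirComp f (branchSep σ m) : Set BTV) = rayTail σ m) :
    f = (addedRay σ).dir :=
  end_ext_of_eventually (fun _ => isComponentSet_rayTail_branchSep.preconnected)
    (eventually_disjoint_rayTail σ) h (.of_forall (coe_dirComp_addedRay σ))

lemma exists_eq_treeRay_dir_or_eq_addedRay_dir (f : GBT.end) :
    ∃ σ, f = (treeRay σ).dir ∨ f = (addedRay σ).dir := by
  obtain ⟨σ, hσ⟩ := exists_forall_liesAbove f
  refine ⟨σ, ?_⟩
  by_cases hA : ∃ m₀, (dirComp f (branchSep σ m₀) : Set BTV) = rayTail σ m₀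
  · obtain ⟨m₀, hm₀⟩ := hA
    refine .inr (eq_addedRay_dir_of_eventually ?_)
    filter_upwards [eventually_ge_atTop m₀] with m hm
    refine ((hσ (m + 2)).coe_dirComp_branchSep).resolve_right fun hB => ?_
    have : Sum.inl (pre2 σ (m + 2)) ∈ rayTail σ m₀ :=
      hm₀ ▸ dirComp_subset f (branchSep_mono hm) (hB ▸ List.prefix_refl _)
    exact inl_notMem_rayTail this
  · push Not at hA
    exact .inl (eq_treeRay_dir_of_eventually
      (.of_forall fun m => ((hσ (m + 2)).coe_dirComp_branchSep).resolve_left (hA m)))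

end Classification

instance : Uncountable (ℕ → Bool) := by
  rw [← Cardinal.aleph0_lt_mk_iff]
  simpa using Cardinal.aleph0_lt_continuum

section Countability

variable {σ : ℕ → Bool}

theorem dirCountablyDetermined_GBT (f : GBT.end) : DirCountablyDetermined f := by
  obtain ⟨σ, hf⟩ := exists_eq_treeRay_dir_or_eq_addedRay_dir f
  refine ⟨Set.range fun m => ⟨branchSep σ m, dirComp f (branchSep σ m)⟩,
    Set.countable_range _, fun g hgf => ?_⟩
  by_contra! hcon
  have hg (m : ℕ) : dirComp g (branchSep σ m) = dirComp f (branchSep σ m) :=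
    hcon _ ⟨m, rfl⟩ rfl
  refine hgf ?_
  rcases hf with rfl | rfl
  · exact eq_treeRay_dir_of_eventually (.of_forall fun m => hg m ▸ coe_dirComp_treeRay σ m)
  · exact eq_addedRay_dir_of_eventually (.of_forall fun m => hg m ▸ coe_dirComp_addedRay σ m)

lemma treeRay_not_tailIn_rayTail (τ σ : ℕ → Bool) (m : ℕ) :
    ¬ (treeRay τ).TailIn (rayTail σ m) :=
  fun ⟨N, hN⟩ => inl_notMem_rayTail (hN N le_rfl)

lemma treeRay_dir_ne_addedRay_dir (τ σ : ℕ → Bool) :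
    (treeRay τ).dir ≠ (addedRay σ).dir := by
  intro h
  refine treeRay_not_tailIn_rayTail τ σ 0 ?_
  rw [← coe_dirComp_addedRay σ 0, ← h]
  exact (treeRay τ).tailIn_dirComp _

lemma dirComp_treeRay_dir_eq_addedRay_dir {X : Finset BTV} (hX : ∀ j, Sum.inr (σ, j) ∉ X) :
    dirComp (treeRay σ).dir X = dirComp (addedRay σ).dir X := by
  obtain ⟨N, hN⟩ := (treeRay σ).tailIn_dirComp X
  have hC (j : ℕ) : Sum.inr (σ, j) ∈ dirComp (treeRay σ).dir X := by
    induction j with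
    | zero => exact ComponentCompl.mem_of_adj _ _ (hN N le_rfl) (hX 0) (adj_spoke σ N).symm
    | succ j ih => exact ComponentCompl.mem_of_adj _ _ ih (hX _) (adj_ray σ j)
  exact (Ray.dirComp_dir_eq_iff.mpr ⟨0, fun j _ => hC j⟩).symm

theorem not_graphCountablyDetermined_GBT : ¬ GraphCountablyDetermined GBT := by
  rintro ⟨D, hD, hsep⟩
  let M : Set (ℕ → Bool) := ⋃ p ∈ D, Prod.fst '' (Sum.inr ⁻¹' (p.1 : Set BTV))
  have hM : M.Countable := hD.biUnion fun p _ =>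
    ((p.1.finite_toSet.preimage Sum.inr_injective.injOn).image _).countable
  obtain ⟨σ, hσ⟩ : ∃ σ, σ ∉ M := by
    by_contra! h
    exact Set.not_countable_univ (hM.mono fun σ _ => h σ)
  obtain ⟨p, hp, h⟩ := hsep _ _ (treeRay_dir_ne_addedRay_dir σ σ)
  have heq := dirComp_treeRay_dir_eq_addedRay_dir (X := p.1) fun j hj =>
    hσ (Set.mem_biUnion hp ⟨(σ, j), hj, rfl⟩)
  rcases h with ⟨h₁, h₂⟩ | ⟨h₁, h₂⟩
  exacts [h₂ (heq ▸ h₁), h₂ (heq ▸ h₁)]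

end Countability

section EndSpace

open Filter Topology TopologicalSpace

variable {σ τ : ℕ → Bool} {m : ℕ}

lemma eq_of_addedRay_tailIn_rayTail (h : (addedRay τ).TailIn (rayTail σ m)) : τ = σ :=
  let ⟨N, hN⟩ := h
  (mem_rayTail_inr.mp (hN N le_rfl)).1

lemma eq_addedRay_dir_of_coe_dirComp_eq {f : GBT.end} {X : Finset BTV}
    (h : (dirComp f X : Set BTV) = rayTail σ m) : f = (addedRay σ).dir := by
  obtain ⟨τ, rfl | rfl⟩ := exists_eq_treeRay_dir_or_eq_addedRay_dir f
  · exact absurd (h ▸ (treeRay τ).tailIn_dirComp X) (treeRay_not_tailIn_rayTail τ σ m)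
  · have hτ : (addedRay τ).TailIn (rayTail σ m) := h ▸ (addedRay τ).tailIn_dirComp X
    rw [eq_of_addedRay_tailIn_rayTail hτ]

lemma exists_eq_treeRay_end_or_eq_addedRay_end (ω : Ends GBT) :
    ∃ σ, ω = (treeRay σ).end GBT ∨ ω = (addedRay σ).end GBT := by
  obtain ⟨σ, h | h⟩ := exists_eq_treeRay_dir_or_eq_addedRay_dir ω.dir
  exacts [⟨σ, .inl (Ends.dir_injective (h.trans (Ray.end_dir _).symm))⟩,
    ⟨σ, .inr (Ends.dir_injective (h.trans (Ray.end_dir _).symm))⟩]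

lemma addedRay_end_injective : Function.Injective fun σ => (addedRay σ).end GBT := by
  intro σ τ h
  have hdir : (addedRay σ).dir = (addedRay τ).dir := by
    simpa only [Ray.end_dir] using congrArg Ends.dir h
  exact eq_of_addedRay_tailIn_rayTail
    (coe_dirComp_addedRay τ 0 ▸ hdir ▸ (addedRay σ).tailIn_dirComp _)

lemma basicSet_addedRay (σ : ℕ → Bool) :
    basicSet GBT (branchSep σ 0) (dirComp (addedRay σ).dir (branchSep σ 0)) =
      {(addedRay σ).end GBT} := by
  ext ω
  rw [Ends.mem_basicSet_iff, Set.mem_singleton_iff]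
  refine ⟨fun h => Ends.dir_injective ?_, fun h => by rw [h, Ray.end_dir]⟩
  rw [Ray.end_dir]
  exact eq_addedRay_dir_of_coe_dirComp_eq ((congrArg _ h).trans (coe_dirComp_addedRay σ 0))

lemma isOpen_singleton_addedRay_end (σ : ℕ → Bool) : IsOpen {(addedRay σ).end GBT} :=
  basicSet_addedRay σ ▸ (isTopologicalBasis_basicSet GBT).isOpen ⟨_, _, rfl⟩

lemma hasBasis_nhds_treeRay_end (σ : ℕ → Bool) :
    (𝓝 ((treeRay σ).end GBT)).HasBasis (fun _ : ℕ => True)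
      fun m => basicSet GBT (branchSep σ m) (dirComp (treeRay σ).dir (branchSep σ m)) := by
  refine ⟨fun U => ⟨fun hU => ?_, fun ⟨m, _, hm⟩ => mem_of_superset ?_ hm⟩⟩
  · obtain ⟨_, ⟨X, C, rfl⟩, hC, hCU⟩ :=
      (isTopologicalBasis_basicSet GBT).mem_nhds_iff.mp hU
    obtain ⟨m, hm⟩ := (eventually_disjoint_cone σ X).exists
    refine ⟨m, trivial, fun ω hω => hCU ?_⟩
    rw [Ends.mem_basicSet_iff, Ray.end_dir] at hC
    rw [Ends.mem_basicSet_iff] at hω ⊢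
    rw [← hC]
    exact dirComp_eq_of_coe_dirComp_eq isComponentSet_cone_branchSep.preconnected hm
      (hω ▸ coe_dirComp_treeRay σ m) (coe_dirComp_treeRay σ m)
  · exact ((isTopologicalBasis_basicSet GBT).isOpen ⟨_, _, rfl⟩).mem_nhds
      (Ends.mem_basicSet_iff.mpr (by rw [Ray.end_dir]))

lemma liesAbove_subset (σ : ℕ → Bool) (m : ℕ) :
    {ω : Ends GBT | LiesAbove ω.dir (pre2 σ (m + 2))} ⊆ insert ((addedRay σ).end GBT)
      (basicSet GBT (branchSep σ m) (dirComp (treeRay σ).dir (branchSep σ m))) := by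
  intro ω hω
  rcases LiesAbove.coe_dirComp_branchSep hω with h | h
  · exact .inl (Ends.dir_injective
      ((eq_addedRay_dir_of_coe_dirComp_eq h).trans (Ray.end_dir _).symm))
  · exact .inr (Ends.mem_basicSet_iff.mpr
      (ComponentCompl.coe_inj.mp (h.trans (coe_dirComp_treeRay σ m).symm)))

theorem compactSpace_ends_GBT : CompactSpace (Ends GBT) := by
  refine ⟨isCompact_of_finite_subcover fun {ι} U hU hcov => ?_⟩
  by_contra hfin
  let P (s : List Bool) : Prop :=
    ¬ ∃ t : Finset ι, {ω : Ends GBT | LiesAbove ω.dir s} ⊆ ⋃ i ∈ t, U i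
  have h₀ : P [] := fun ⟨t, ht⟩ => hfin ⟨t, fun ω _ => ht (liesAbove_nil ω.dir)⟩
  have hstep (s : List Bool) (hs : P s) : ∃ b, P (s ++ [b]) := by
    by_contra! h
    simp only [P, not_not] at h
    choose t ht using h
    refine hs ⟨t true ∪ t false, fun ω hω => ?_⟩
    obtain ⟨b, hb⟩ := LiesAbove.exists_child hω
    exact Set.biUnion_subset_biUnion_left (by cases b <;> simp) (ht b hb)
  obtain ⟨σ, hσ⟩ := exists_forall_pre2 h₀ hstep
  obtain ⟨i₀, hi₀⟩ := Set.mem_iUnion.mp (hcov (Set.mem_univ ((treeRay σ).end GBT)))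
  obtain ⟨i₁, hi₁⟩ := Set.mem_iUnion.mp (hcov (Set.mem_univ ((addedRay σ).end GBT)))
  obtain ⟨m, -, hm⟩ := (hasBasis_nhds_treeRay_end σ).mem_iff.mp ((hU i₀).mem_nhds hi₀)
  refine hσ (m + 2) ⟨{i₀, i₁}, (liesAbove_subset σ m).trans ?_⟩
  rintro ω (rfl | hω)
  · exact Set.mem_biUnion (by simp) hi₁
  · exact Set.mem_biUnion (by simp) (hm hω)

theorem isCountablyGenerated_nhds_ends_GBT (ω : Ends GBT) : (𝓝 ω).IsCountablyGenerated := by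
  obtain ⟨σ, rfl | rfl⟩ := exists_eq_treeRay_end_or_eq_addedRay_end ω
  · exact (hasBasis_nhds_treeRay_end σ).isCountablyGenerated
  · rw [(isOpen_singleton_iff_nhds_eq_pure _).mp (isOpen_singleton_addedRay_end σ)]
    exact isCountablyGenerated_pure _

theorem not_separableSpace_ends_GBT : ¬ SeparableSpace (Ends GBT) := fun _ =>
  not_countable (α := ℕ → Bool) <| Pairwise.countable_of_isOpen_disjoint
    (fun _ _ h => Set.disjoint_singleton.mpr (addedRay_end_injective.ne h))
    isOpen_singleton_addedRay_end fun _ => Set.singleton_nonempty _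

end EndSpace

/-- There is a connected graph all of whose directions are countably
determined but which is itself not countably determined; its end space is
compact and first countable at every end, but neither separable nor second
countable nor metrisable.  Such a graph is `GBT`, obtained from the binary
tree `T₂` by adding, for each rooted ray `R ⊆ T₂`, a disjoint new ray `R'`
whose first vertex is joined to all vertices of `R`. -/
theorem stmt_11 :
    GBT.Connected ∧
    (∀ f : GBT.end, DirCountablyDetermined f) ∧
    ¬ GraphCountablyDetermined GBT ∧
    CompactSpace (Ends GBT) ∧
    (∀ ω : Ends GBT, (nhds ω).IsCountablyGenerated) ∧
    ¬ TopologicalSpace.SeparableSpace (Ends GBT) ∧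
    ¬ SecondCountableTopology (Ends GBT) ∧
    ¬ TopologicalSpace.MetrizableSpace (Ends GBT) := by
  have := compactSpace_ends_GBT
  exact ⟨connected_GBT, dirCountablyDetermined_GBT, not_graphCountablyDetermined_GBT, this,
    isCountablyGenerated_nhds_ends_GBT, not_separableSpace_ends_GBT,
    fun _ => not_separableSpace_ends_GBT inferInstance,
    -- a compact metrizable space is second countable
    fun _ => not_separableSpace_ends_GBT inferInstance⟩
end
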